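/- Let S be a finite set of functions from a finite set Ω to some set V, and suppose that every pair of distinct functions f, g ∈ S disagrees on at least |Ω|/3 points of Ω. Then there exists a subset T ⊆ Ω of size at most ⌈log|S|² / log(3/2)⌉ + 1 such that any two distinct functions of S differ at some point of T. -/
import Mathlib

open Finset

lemma stmt_9_aux (Ω V : Type*) [Fintype Ω] [DecidableEq V] :
    ∀ k : ℕ, ∀ P : Finset ((Ω → V) × (Ω → V)),
    (∀ p ∈ P, p.1 ≠ p.2 ∧
      (Fintype.card Ω : ℝ) / 3 ≤ (univ.filter fun x => p.1 x ≠ p.2 x).card) →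
    (P.card : ℝ) < (3 / 2) ^ k →
    ∃ T : Finset Ω, T.card ≤ k ∧ ∀ p ∈ P, ∃ x ∈ T, p.1 x ≠ p.2 x := by
  classical
  intro k
  induction k with
  | zero =>
    intro P hP hcard
    simp at hcard
    exact ⟨∅, le_refl _, by simp [hcard]⟩
  | succ k ih =>
    intro P hP hcard
    rcases P.eq_empty_or_nonempty with rfl | hne
    · exact ⟨∅, by simp, by simp⟩
    obtain ⟨p₀, hp₀⟩ := hne
    have hΩ : (univ : Finset Ω).Nonempty := by
      by_contra hΩ
      have hx : ∀ x : Ω, False := fun x => hΩ ⟨x, mem_univ x⟩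
      exact (hP p₀ hp₀).1 (funext fun x => (hx x).elim)
    have hPpos : (0:ℝ) < P.card := by
      have : P.Nonempty := ⟨p₀, hp₀⟩
      exact_mod_cast Finset.card_pos.mpr this
    set c : Ω → ℕ := fun x => (P.filter fun p => p.1 x ≠ p.2 x).card with hc
    have hnat : ∑ x : Ω, c x = ∑ p ∈ P, (univ.filter fun x => p.1 x ≠ p.2 x).card := by
      simp only [hc, Finset.card_filter]
      exact Finset.sum_comm
    have hsum2 : ∑ x : Ω, ((P.card : ℝ) / 3) ≤ ∑ x : Ω, (c x : ℝ) := by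
      have h1 : ∑ x : Ω, (c x : ℝ) = ∑ p ∈ P, ((univ.filter fun x => p.1 x ≠ p.2 x).card : ℝ) := by
        exact_mod_cast congrArg (Nat.cast : ℕ → ℝ) hnat
      rw [h1]
      calc ∑ x : Ω, ((P.card : ℝ) / 3) = (Fintype.card Ω : ℝ) * (P.card / 3) := by
            rw [Finset.sum_const, Finset.card_univ, nsmul_eq_mul]
        _ = ∑ p ∈ P, (Fintype.card Ω : ℝ) / 3 := by
            rw [Finset.sum_const, nsmul_eq_mul]; ring
        _ ≤ _ := Finset.sum_le_sum fun p hp => (hP p hp).2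
    obtain ⟨x, -, hx⟩ := Finset.exists_le_of_sum_le hΩ hsum2
    set P' : Finset ((Ω → V) × (Ω → V)) := P.filter (fun p => ¬ p.1 x ≠ p.2 x) with hP'
    have hsplit : c x + P'.card = P.card :=
      Finset.card_filter_add_card_filter_not (s := P) (p := fun p => p.1 x ≠ p.2 x)
    have hP'card : (P'.card : ℝ) < (3/2)^k := by
      have h1 : (P'.card : ℝ) = P.card - c x := by
        have := hsplit
        push_cast [← this]
        ring
      have h2 : (P.card : ℝ) / 3 ≤ c x := hx
      have h3 : ((3:ℝ)/2)^(k+1) = (3/2) * (3/2)^k := by ring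
      rw [h1]
      rw [h3] at hcard
      nlinarith [pow_pos (by norm_num : (0:ℝ) < 3/2) k]
    obtain ⟨T', hT'le, hT'⟩ := ih P' (fun p hp => hP p (Finset.mem_filter.mp hp).1) hP'card
    refine ⟨insert x T', ?_, ?_⟩
    · calc (insert x T').card ≤ T'.card + 1 := Finset.card_insert_le _ _
        _ ≤ k + 1 := by omega
    · intro p hp
      by_cases hpx : p.1 x ≠ p.2 x
      · exact ⟨x, Finset.mem_insert_self _ _, hpx⟩
      · obtain ⟨y, hy, hy2⟩ := hT' p (Finset.mem_filter.mpr ⟨hp, hpx⟩)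
        exact ⟨y, Finset.mem_insert_of_mem hy, hy2⟩

open Finset in
/-- If every pair of distinct functions in a finite family `S` of functions on a finite
set `Ω` disagrees on at least `|Ω|/3` points, then there is a test set `T` of size at most
`⌈log |S|² / log (3/2)⌉ + 1` such that any two distinct members of `S` differ on `T`. -/
theorem stmt_9 (Ω V : Type*) [Fintype Ω] [DecidableEq V]
    (S : Finset (Ω → V))
    (h : ∀ f ∈ S, ∀ g ∈ S, f ≠ g →
      (Fintype.card Ω : ℝ) / 3 ≤ (univ.filter fun x => f x ≠ g x).card) :
    ∃ T : Finset Ω,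
      T.card ≤ ⌈Real.log ((S.card : ℝ) ^ 2) / Real.log (3 / 2)⌉₊ + 1 ∧
      ∀ f ∈ S, ∀ g ∈ S, f ≠ g → ∃ x ∈ T, f x ≠ g x := by
  set k := ⌈Real.log ((S.card : ℝ) ^ 2) / Real.log (3 / 2)⌉₊ with hk
  set P : Finset ((Ω → V) × (Ω → V)) := (S ×ˢ S).filter (fun p => p.1 ≠ p.2) with hPdef
  have hPmem : ∀ p ∈ P, p.1 ∈ S ∧ p.2 ∈ S ∧ p.1 ≠ p.2 := by
    intro p hp
    obtain ⟨hps, hne⟩ := Finset.mem_filter.mp hp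
    obtain ⟨h1, h2⟩ := Finset.mem_product.mp hps
    exact ⟨h1, h2, hne⟩
  have hPcard : P.card ≤ S.card ^ 2 := by
    calc P.card ≤ (S ×ˢ S).card := Finset.card_filter_le _ _
      _ = S.card ^ 2 := by rw [Finset.card_product]; ring
  have hlog : (0:ℝ) < Real.log (3/2) := Real.log_pos (by norm_num)
  have hbound : ((S.card : ℝ)) ^ 2 < (3/2 : ℝ) ^ (k + 1) := by
    rcases Nat.eq_zero_or_pos S.card with h0 | hpos
    · rw [h0]; push_cast
      exact lt_of_le_of_lt (by norm_num) (pow_pos (by norm_num : (0:ℝ) < 3/2) (k+1))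
    · have ha : (1:ℝ) ≤ (S.card : ℝ)^2 := by
        have : (1:ℝ) ≤ (S.card : ℝ) := by exact_mod_cast hpos
        nlinarith
      have h1 : Real.log ((S.card : ℝ)^2) ≤ (k : ℝ) * Real.log (3/2) := by
        have := Nat.le_ceil (Real.log ((S.card : ℝ)^2) / Real.log (3/2))
        rw [← hk] at this
        calc Real.log ((S.card : ℝ)^2)
            = (Real.log ((S.card : ℝ)^2) / Real.log (3/2)) * Real.log (3/2) := by
              field_simp
          _ ≤ (k : ℝ) * Real.log (3/2) := by
              exact mul_le_mul_of_nonneg_right this hlog.le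
      have h2 : (S.card : ℝ)^2 ≤ (3/2:ℝ)^k := by
        have hlogpow : Real.log ((3/2:ℝ)^k) = (k:ℝ) * Real.log (3/2) := by
          rw [Real.log_pow]
        have := h1.trans_eq hlogpow.symm
        exact (Real.log_le_log_iff (by linarith) (pow_pos (by norm_num) k)).mp this
      calc ((S.card : ℝ))^2 ≤ (3/2:ℝ)^k := h2
        _ < (3/2:ℝ)^(k+1) := by
          have := pow_pos (by norm_num : (0:ℝ) < 3/2) k
          rw [pow_succ]; nlinarith
  have hPlt : (P.card : ℝ) < (3/2:ℝ) ^ (k + 1) := by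
    have : (P.card : ℝ) ≤ (S.card : ℝ)^2 := by exact_mod_cast hPcard
    linarith
  obtain ⟨T, hTcard, hT⟩ := stmt_9_aux Ω V (k+1) P
    (fun p hp => ⟨(hPmem p hp).2.2, h p.1 (hPmem p hp).1 p.2 (hPmem p hp).2.1 (hPmem p hp).2.2⟩)
    hPlt
  refine ⟨T, hTcard, fun f hf g hg hfg => ?_⟩
  exact hT (f, g) (Finset.mem_filter.mpr ⟨Finset.mem_product.mpr ⟨hf, hg⟩, hfg⟩)
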